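/- If ξ″ = ξ′ and h = 0, then F(x,γ) = (1/2)·ln(1−γ²) + Φ(x/√(2ξ′)) for all x ∈ ℝ and γ ∈ (−1,1), and the supremum of F over ℝ×(−1,1) equals 0 and is attained at (0,0). -/
import Mathlib


/-- Φ(x) = −(|x|·√(x²−2))/2 + ln((|x|+√(x²−2))/√2) when |x| ≥ √2, and 0 when |x| < √2. -/
noncomputable def Phi (x : ℝ) : ℝ :=
  if Real.sqrt 2 ≤ |x| then
    -(|x| * Real.sqrt (x ^ 2 - 2)) / 2 +
      Real.log ((|x| + Real.sqrt (x ^ 2 - 2)) / Real.sqrt 2)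
  else 0

/-- F(x,γ) = (1/2)·ln(1−γ²) + h²γ²/(2ξ′) − x²/(2(ξ′+ξ″)) + (x+hγ)²/(4ξ″)
+ Φ((x+hγ)/√(2ξ″)). -/
noncomputable def F (ξ' ξ'' h x γ : ℝ) : ℝ :=
  (1 / 2) * Real.log (1 - γ ^ 2) + h ^ 2 * γ ^ 2 / (2 * ξ') -
    x ^ 2 / (2 * (ξ' + ξ'')) + (x + h * γ) ^ 2 / (4 * ξ'') +
    Phi ((x + h * γ) / Real.sqrt (2 * ξ''))

lemma Phi_nonpos (x : ℝ) : Phi x ≤ 0 := by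
  unfold Phi
  split_ifs with hx
  · set t := |x| with ht
    set s := Real.sqrt (x ^ 2 - 2) with hs
    have h2 : (0:ℝ) < Real.sqrt 2 := by positivity
    have h2sq : Real.sqrt 2 * Real.sqrt 2 = 2 := Real.mul_self_sqrt (by norm_num)
    have ht2 : Real.sqrt 2 ≤ t := hx
    have htpos : 0 < t := lt_of_lt_of_le h2 ht2
    have ht2' : 2 ≤ t ^ 2 := by nlinarith
    have hxsq : x ^ 2 = t ^ 2 := (sq_abs x).symm
    have hs0 : 0 ≤ s := Real.sqrt_nonneg _
    have hssq : s ^ 2 = t ^ 2 - 2 := by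
      rw [hs, Real.sq_sqrt (by rw [hxsq]; linarith), hxsq]
    have hy : (0:ℝ) < (t + s) / Real.sqrt 2 := by positivity
    have hinv : ((t + s) / Real.sqrt 2)⁻¹ = (t - s) / Real.sqrt 2 := by
      have hmul : ((t + s) / Real.sqrt 2) * ((t - s) / Real.sqrt 2) = 1 := by
        field_simp
        nlinarith
      exact inv_eq_of_mul_eq_one_right hmul
    have hsinh : Real.sinh (Real.log ((t + s) / Real.sqrt 2)) = s / Real.sqrt 2 := by
      rw [Real.sinh_log hy, hinv]; ring
    have hcosh : Real.cosh (Real.log ((t + s) / Real.sqrt 2)) = t / Real.sqrt 2 := by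
      rw [Real.cosh_log hy, hinv]; ring
    set θ := Real.log ((t + s) / Real.sqrt 2) with hθ
    have hθ0 : 0 ≤ θ := Real.log_nonneg (by
      rw [le_div_iff₀ h2]; nlinarith)
    have hself : θ ≤ Real.sinh θ := by
      rcases eq_or_lt_of_le hθ0 with h|h
      · simp [← h]
      · exact (Real.self_lt_sinh_iff.mpr h).le
    have hcosh1 : 1 ≤ Real.cosh θ := Real.one_le_cosh θ
    have hsinh0 : 0 ≤ Real.sinh θ := by rw [hsinh]; positivity
    have hprod : θ ≤ Real.sinh θ * Real.cosh θ := by nlinarith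
    have hts : Real.sinh θ * Real.cosh θ = t * s / 2 := by
      rw [hsinh, hcosh]
      field_simp
      nlinarith
    linarith [hts ▸ hprod]
  · exact le_refl 0

/-- If ξ″ = ξ′ and h = 0, then F(x,γ) = (1/2)·ln(1−γ²) + Φ(x/√(2ξ′)) on ℝ×(−1,1), and
the supremum of F over ℝ×(−1,1) equals 0 and is attained at (0,0). -/
theorem stmt_15 (ξ' ξ'' h : ℝ) (hξ' : 0 < ξ') (hξ'' : 0 < ξ'') (hh : 0 ≤ h)
    (heq : ξ'' = ξ') (h0 : h = 0) :
    (∀ x γ : ℝ, -1 < γ → γ < 1 →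
      F ξ' ξ'' h x γ = (1 / 2) * Real.log (1 - γ ^ 2) + Phi (x / Real.sqrt (2 * ξ'))) ∧
    F ξ' ξ'' h 0 0 = 0 ∧
    (∀ x γ : ℝ, -1 < γ → γ < 1 → F ξ' ξ'' h x γ ≤ 0) := by
  have hkey : ∀ x γ : ℝ,
      F ξ' ξ'' h x γ = (1 / 2) * Real.log (1 - γ ^ 2) + Phi (x / Real.sqrt (2 * ξ')) := by
    intro x γ
    rw [heq, h0]
    unfold F
    have h4 : 2 * (ξ' + ξ') = 4 * ξ' := by ring
    rw [h4]
    ring_nf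
  refine ⟨fun x γ _ _ => hkey x γ, ?_, ?_⟩
  · rw [hkey 0 0]
    have hphi0 : Phi 0 = 0 := by
      unfold Phi
      rw [if_neg (by simp)]
    simp [hphi0]
  · intro x γ hγ1 hγ2
    rw [hkey x γ]
    have hlog : Real.log (1 - γ ^ 2) ≤ 0 := by
      apply Real.log_nonpos <;> nlinarith
    linarith [Phi_nonpos (x / Real.sqrt (2 * ξ'))]
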